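/- With E, γ, V as above, the automorphism κ(e⊗v) = Σ eγ(v₍₋₁₎)⊗v₍₀₎ restricts to an isomorphism of left E^{coH}-modules from E^{coH}⊗V onto the cotensor product E□V, where E□V ⊂ E⊗V is the equalizer of ρ_E⊗id_V and id_E⊗ρ_V. -/
import Mathlib


open TensorProduct

/-- Convolution product on linear maps from a coalgebra to an algebra. -/
noncomputable def conv {k H E : Type*} [CommSemiring k] [Semiring H] [Bialgebra k H]
    [Semiring E] [Algebra k E] (f g : H →ₗ[k] E) : H →ₗ[k] E :=
  LinearMap.mul' k E ∘ₗ TensorProduct.map f g ∘ₗ Coalgebra.comul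

/-- The map `κ : E ⊗ V → E ⊗ V`, `κ(e ⊗ v) = Σ e γ(v₍₋₁₎) ⊗ v₍₀₎`, built from a linear
map `γ : H → E` and a left coaction `ρV : V → H ⊗ V`. -/
noncomputable def kap {k H E V : Type*} [Field k] [Ring H] [HopfAlgebra k H] [Ring E]
    [Algebra k E] [AddCommGroup V] [Module k V]
    (γ : H →ₗ[k] E) (ρV : V →ₗ[k] H ⊗[k] V) : E ⊗[k] V →ₗ[k] E ⊗[k] V :=
  TensorProduct.map (LinearMap.mul' k E ∘ₗ LinearMap.lTensor E γ) LinearMap.id ∘ₗ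
    (TensorProduct.assoc k E H V).symm.toLinearMap ∘ₗ LinearMap.lTensor E ρV

/-- The subalgebra of coinvariants of a right `H`-comodule algebra. -/
def coinv {k H E : Type*} [Field k] [Ring H] [HopfAlgebra k H] [Ring E] [Algebra k E]
    (ρ : E →ₐ[k] E ⊗[k] H) : Subalgebra k E where
  carrier := {u : E | ρ u = u ⊗ₜ (1 : H)}
  mul_mem' := by
    intro a b ha hb
    simp only [Set.mem_setOf_eq] at *
    rw [map_mul, ha, hb, Algebra.TensorProduct.tmul_mul_tmul, one_mul]
  add_mem' := by
    intro a b ha hb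
    simp only [Set.mem_setOf_eq] at *
    rw [map_add, ha, hb, ← TensorProduct.add_tmul]
  algebraMap_mem' := by
    intro r
    simp only [Set.mem_setOf_eq, AlgHom.commutes, Algebra.TensorProduct.algebraMap_apply]

/-- The cotensor product `E □ V ⊆ E ⊗ V`: the equalizer of `ρ_E ⊗ id_V` and
`id_E ⊗ ρ_V` (compared through the associator). -/
def cotensor {k H E V : Type*} [Field k] [Ring H] [HopfAlgebra k H] [Ring E] [Algebra k E]
    [AddCommGroup V] [Module k V]
    (ρ : E →ₐ[k] E ⊗[k] H) (ρV : V →ₗ[k] H ⊗[k] V) : Set (E ⊗[k] V) :=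
  {x : E ⊗[k] V | (TensorProduct.assoc k E H V) (LinearMap.rTensor V ρ.toLinearMap x) =
    LinearMap.lTensor E ρV x}

set_option maxHeartbeats 1000000
set_option synthInstance.maxHeartbeats 100000

section ConvAlg

variable {k H A B : Type*} [CommSemiring k] [Semiring H] [Bialgebra k H]
  [Semiring A] [Algebra k A] [Semiring B] [Algebra k B]

lemma mul'_comp_map_algHom (φ : A →ₐ[k] B) :
    LinearMap.mul' k B ∘ₗ TensorProduct.map φ.toLinearMap φ.toLinearMap
      = φ.toLinearMap ∘ₗ LinearMap.mul' k A := by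
  apply TensorProduct.ext'
  intro a b
  simp

lemma conv_algHom (φ : A →ₐ[k] B) (f g : H →ₗ[k] A) :
    conv (φ.toLinearMap ∘ₗ f) (φ.toLinearMap ∘ₗ g) = φ.toLinearMap ∘ₗ conv f g := by
  unfold conv
  rw [TensorProduct.map_comp, ← LinearMap.comp_assoc, ← LinearMap.comp_assoc,
    mul'_comp_map_algHom]
  rfl

lemma conv_assoc (f g h : H →ₗ[k] A) : conv (conv f g) h = conv f (conv g h) := by
  have this1 : TensorProduct.map (conv f g) h
      = (TensorProduct.map (LinearMap.mul' k A ∘ₗ TensorProduct.map f g) h)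
          ∘ₗ LinearMap.rTensor H (Coalgebra.comul (R := k)) := by
    apply TensorProduct.ext'
    intro x y
    simp [conv]
  have this2 : TensorProduct.map f (conv g h)
      = (TensorProduct.map f (LinearMap.mul' k A ∘ₗ TensorProduct.map g h))
          ∘ₗ LinearMap.lTensor H (Coalgebra.comul (R := k)) := by
    apply TensorProduct.ext'
    intro x y
    simp [conv]
  have e3 : (LinearMap.mul' k A
        ∘ₗ TensorProduct.map f (LinearMap.mul' k A ∘ₗ TensorProduct.map g h))
      ∘ₗ (TensorProduct.assoc k H H H).toLinearMap
      = LinearMap.mul' k A ∘ₗ TensorProduct.map (LinearMap.mul' k A ∘ₗ TensorProduct.map f g) h := by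
    apply TensorProduct.ext_threefold
    intro x y z
    simp [mul_assoc]
  apply LinearMap.ext
  intro a
  have key := Coalgebra.coassoc_apply (R := k) a
  calc (conv (conv f g) h) a
      = LinearMap.mul' k A ((TensorProduct.map (conv f g) h) (Coalgebra.comul a)) := rfl
    _ = LinearMap.mul' k A ((TensorProduct.map (LinearMap.mul' k A ∘ₗ TensorProduct.map f g) h)
          (LinearMap.rTensor H (Coalgebra.comul (R := k)) (Coalgebra.comul a))) := by
        rw [this1]; rfl
    _ = ((LinearMap.mul' k A
          ∘ₗ TensorProduct.map f (LinearMap.mul' k A ∘ₗ TensorProduct.map g h))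
          ∘ₗ (TensorProduct.assoc k H H H).toLinearMap)
          (LinearMap.rTensor H (Coalgebra.comul (R := k)) (Coalgebra.comul a)) := by
        rw [e3]; rfl
    _ = (LinearMap.mul' k A)
          ((TensorProduct.map f (LinearMap.mul' k A ∘ₗ TensorProduct.map g h))
          (LinearMap.lTensor H (Coalgebra.comul (R := k)) (Coalgebra.comul a))) := by
        simp only [LinearMap.comp_apply, LinearEquiv.coe_coe]
        rw [key]
    _ = (conv f (conv g h)) a := by
        have e4 : (conv f (conv g h)) a
            = (LinearMap.mul' k A)
              ((TensorProduct.map f (LinearMap.mul' k A ∘ₗ TensorProduct.map g h))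
              (LinearMap.lTensor H (Coalgebra.comul (R := k)) (Coalgebra.comul a))) := by
          have : (conv f (conv g h)) a
              = LinearMap.mul' k A ((TensorProduct.map f (conv g h)) (Coalgebra.comul a)) := rfl
          rw [this, this2]; rfl
        exact e4.symm

lemma conv_one_right (f : H →ₗ[k] A) :
    conv f (Algebra.linearMap k A ∘ₗ Coalgebra.counit) = f := by
  have e1 : LinearMap.mul' k A
      ∘ₗ TensorProduct.map f (Algebra.linearMap k A ∘ₗ Coalgebra.counit (R := k) (A := H))
      = f ∘ₗ (TensorProduct.rid k H).toLinearMap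
          ∘ₗ LinearMap.lTensor H (Coalgebra.counit (R := k)) := by
    apply TensorProduct.ext'
    intro x y
    simp only [LinearMap.comp_apply, TensorProduct.map_tmul, LinearMap.mul'_apply,
      Algebra.linearMap_apply, LinearMap.lTensor_tmul, LinearEquiv.coe_coe,
      TensorProduct.rid_tmul, map_smul, LinearMap.id_coe, id_eq]
    rw [Algebra.smul_def]
    exact (Algebra.commutes _ _).symm
  apply LinearMap.ext
  intro a
  calc (conv f (Algebra.linearMap k A ∘ₗ Coalgebra.counit)) a
      = (LinearMap.mul' k A
          ∘ₗ TensorProduct.map f (Algebra.linearMap k A ∘ₗ Coalgebra.counit (R := k) (A := H)))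
          (Coalgebra.comul a) := rfl
    _ = f ((TensorProduct.rid k H)
          (LinearMap.lTensor H (Coalgebra.counit (R := k)) (Coalgebra.comul a))) := by
        rw [e1]; rfl
    _ = f a := by
        rw [Coalgebra.lTensor_counit_comul]; simp

lemma conv_one_left (f : H →ₗ[k] A) :
    conv (Algebra.linearMap k A ∘ₗ Coalgebra.counit) f = f := by
  have e1 : LinearMap.mul' k A
      ∘ₗ TensorProduct.map (Algebra.linearMap k A ∘ₗ Coalgebra.counit (R := k) (A := H)) f
      = f ∘ₗ (TensorProduct.lid k H).toLinearMap
          ∘ₗ LinearMap.rTensor H (Coalgebra.counit (R := k)) := by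
    apply TensorProduct.ext'
    intro x y
    simp only [LinearMap.comp_apply, TensorProduct.map_tmul, LinearMap.mul'_apply,
      Algebra.linearMap_apply, LinearMap.rTensor_tmul, LinearEquiv.coe_coe,
      TensorProduct.lid_tmul, map_smul, LinearMap.id_coe, id_eq]
    rw [Algebra.smul_def]
  apply LinearMap.ext
  intro a
  calc (conv (Algebra.linearMap k A ∘ₗ Coalgebra.counit) f) a
      = (LinearMap.mul' k A
          ∘ₗ TensorProduct.map (Algebra.linearMap k A ∘ₗ Coalgebra.counit (R := k) (A := H)) f)
          (Coalgebra.comul a) := rfl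
    _ = f ((TensorProduct.lid k H)
          (LinearMap.rTensor H (Coalgebra.counit (R := k)) (Coalgebra.comul a))) := by
        rw [e1]; rfl
    _ = f a := by
        rw [Coalgebra.rTensor_counit_comul]; simp

end ConvAlg

section Colin
variable {k H E : Type*} [Field k] [Ring H] [HopfAlgebra k H] [Ring E] [Algebra k E]

/-- composing with an algebra map preserves the convolution unit -/
lemma algHom_comp_unit {A B : Type*} [Semiring A] [Algebra k A] [Semiring B] [Algebra k B]
    (φ : A →ₐ[k] B) :
    φ.toLinearMap ∘ₗ (Algebra.linearMap k A ∘ₗ Coalgebra.counit (R := k) (A := H))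
      = Algebra.linearMap k B ∘ₗ Coalgebra.counit := by
  apply LinearMap.ext; intro h
  simp

lemma gamma'_colinear (ρ : E →ₐ[k] E ⊗[k] H) (γ γ' : H →ₗ[k] E)
    (hγ : ∀ h : H, ρ (γ h) = TensorProduct.map γ LinearMap.id (Coalgebra.comul (R := k) h))
    (hconv₁ : conv γ γ' = Algebra.linearMap k E ∘ₗ Coalgebra.counit)
    (hconv₂ : conv γ' γ = Algebra.linearMap k E ∘ₗ Coalgebra.counit) :
    ρ.toLinearMap ∘ₗ γ'
      = (TensorProduct.map γ' (HopfAlgebra.antipode (R := k) (A := H))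
          ∘ₗ (TensorProduct.comm k H H).toLinearMap) ∘ₗ Coalgebra.comul := by
  have hmul34 : LinearMap.mul' k (E ⊗[k] H) ∘ₗ TensorProduct.map
        ((Algebra.TensorProduct.includeLeft (R := k) (S := k) (A := E) (B := H)).toLinearMap ∘ₗ γ)
        (Algebra.TensorProduct.includeRight (R := k) (A := E) (B := H)).toLinearMap
      = TensorProduct.map γ LinearMap.id := by
    apply TensorProduct.ext'; intro x y
    simp [Algebra.TensorProduct.tmul_mul_tmul]
  have hF : ρ.toLinearMap ∘ₗ γ = conv
      ((Algebra.TensorProduct.includeLeft (R := k) (S := k) (A := E) (B := H)).toLinearMap ∘ₗ γ)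
      (Algebra.TensorProduct.includeRight (R := k) (A := E) (B := H)).toLinearMap := by
    apply LinearMap.ext; intro h
    have : conv
        ((Algebra.TensorProduct.includeLeft (R := k) (S := k) (A := E) (B := H)).toLinearMap ∘ₗ γ)
        (Algebra.TensorProduct.includeRight (R := k) (A := E) (B := H)).toLinearMap h
        = (LinearMap.mul' k (E ⊗[k] H) ∘ₗ TensorProduct.map
            ((Algebra.TensorProduct.includeLeft (R := k) (S := k) (A := E) (B := H)).toLinearMap ∘ₗ γ)
            (Algebra.TensorProduct.includeRight (R := k) (A := E) (B := H)).toLinearMap)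
          (Coalgebra.comul h) := rfl
    rw [this, hmul34]
    exact hγ h
  have hmul12 : LinearMap.mul' k (E ⊗[k] H) ∘ₗ TensorProduct.map
        ((Algebra.TensorProduct.includeRight (R := k) (A := E) (B := H)).toLinearMap
          ∘ₗ HopfAlgebra.antipode (R := k) (A := H))
        ((Algebra.TensorProduct.includeLeft (R := k) (S := k) (A := E) (B := H)).toLinearMap ∘ₗ γ')
      = TensorProduct.map γ' (HopfAlgebra.antipode (R := k) (A := H))
          ∘ₗ (TensorProduct.comm k H H).toLinearMap := by
    apply TensorProduct.ext'; intro x y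
    simp [Algebra.TensorProduct.tmul_mul_tmul]
  have hB : conv
      ((Algebra.TensorProduct.includeRight (R := k) (A := E) (B := H)).toLinearMap
        ∘ₗ HopfAlgebra.antipode (R := k) (A := H))
      ((Algebra.TensorProduct.includeLeft (R := k) (S := k) (A := E) (B := H)).toLinearMap ∘ₗ γ')
      = (TensorProduct.map γ' (HopfAlgebra.antipode (R := k) (A := H))
          ∘ₗ (TensorProduct.comm k H H).toLinearMap) ∘ₗ Coalgebra.comul := by
    apply LinearMap.ext; intro h
    have : conv
        ((Algebra.TensorProduct.includeRight (R := k) (A := E) (B := H)).toLinearMap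
          ∘ₗ HopfAlgebra.antipode (R := k) (A := H))
        ((Algebra.TensorProduct.includeLeft (R := k) (S := k) (A := E) (B := H)).toLinearMap ∘ₗ γ') h
        = (LinearMap.mul' k (E ⊗[k] H) ∘ₗ TensorProduct.map
            ((Algebra.TensorProduct.includeRight (R := k) (A := E) (B := H)).toLinearMap
              ∘ₗ HopfAlgebra.antipode (R := k) (A := H))
            ((Algebra.TensorProduct.includeLeft (R := k) (S := k) (A := E) (B := H)).toLinearMap ∘ₗ γ'))
          (Coalgebra.comul h) := rfl
    rw [this, hmul12]
    rfl
  have hu23 : conv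
      ((Algebra.TensorProduct.includeLeft (R := k) (S := k) (A := E) (B := H)).toLinearMap ∘ₗ γ')
      ((Algebra.TensorProduct.includeLeft (R := k) (S := k) (A := E) (B := H)).toLinearMap ∘ₗ γ)
      = Algebra.linearMap k (E ⊗[k] H) ∘ₗ Coalgebra.counit := by
    rw [conv_algHom, hconv₂, algHom_comp_unit]
  have hSid : conv (HopfAlgebra.antipode (R := k) (A := H)) (LinearMap.id : H →ₗ[k] H)
      = Algebra.linearMap k H ∘ₗ Coalgebra.counit := by
    have : TensorProduct.map (HopfAlgebra.antipode (R := k) (A := H)) (LinearMap.id : H →ₗ[k] H)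
        = LinearMap.rTensor H (HopfAlgebra.antipode (R := k) (A := H)) := rfl
    rw [conv, this]
    exact HopfAlgebra.mul_antipode_rTensor_comul
  have hu14 : conv
      ((Algebra.TensorProduct.includeRight (R := k) (A := E) (B := H)).toLinearMap
        ∘ₗ HopfAlgebra.antipode (R := k) (A := H))
      (Algebra.TensorProduct.includeRight (R := k) (A := E) (B := H)).toLinearMap
      = Algebra.linearMap k (E ⊗[k] H) ∘ₗ Coalgebra.counit := by
    have h4 : (Algebra.TensorProduct.includeRight (R := k) (A := E) (B := H)).toLinearMap
        = (Algebra.TensorProduct.includeRight (R := k) (A := E) (B := H)).toLinearMap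
            ∘ₗ (LinearMap.id : H →ₗ[k] H) := (LinearMap.comp_id _).symm
    nth_rewrite 2 [h4]
    rw [conv_algHom, hSid, algHom_comp_unit]
  -- B * F = etaeps, F * G = etaeps, and uniqueness
  set u1 : H →ₗ[k] E ⊗[k] H :=
    (Algebra.TensorProduct.includeRight (R := k) (A := E) (B := H)).toLinearMap
      ∘ₗ HopfAlgebra.antipode (R := k) (A := H) with hu1
  set u2 : H →ₗ[k] E ⊗[k] H :=
    (Algebra.TensorProduct.includeLeft (R := k) (S := k) (A := E) (B := H)).toLinearMap ∘ₗ γ'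
    with hu2
  set u3 : H →ₗ[k] E ⊗[k] H :=
    (Algebra.TensorProduct.includeLeft (R := k) (S := k) (A := E) (B := H)).toLinearMap ∘ₗ γ
    with hu3
  set u4 : H →ₗ[k] E ⊗[k] H :=
    (Algebra.TensorProduct.includeRight (R := k) (A := E) (B := H)).toLinearMap with hu4
  have hBF : conv (conv u1 u2) (conv u3 u4)
      = Algebra.linearMap k (E ⊗[k] H) ∘ₗ Coalgebra.counit := by
    rw [conv_assoc, ← conv_assoc u2 u3 u4, hu23, conv_one_left, hu14]
  have hFG : conv (ρ.toLinearMap ∘ₗ γ) (ρ.toLinearMap ∘ₗ γ')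
      = Algebra.linearMap k (E ⊗[k] H) ∘ₗ Coalgebra.counit := by
    rw [conv_algHom, hconv₁, algHom_comp_unit]
  calc ρ.toLinearMap ∘ₗ γ'
      = conv (Algebra.linearMap k (E ⊗[k] H) ∘ₗ Coalgebra.counit) (ρ.toLinearMap ∘ₗ γ') :=
        (conv_one_left _).symm
    _ = conv (conv (conv u1 u2) (conv u3 u4)) (ρ.toLinearMap ∘ₗ γ') := by rw [hBF]
    _ = conv (conv u1 u2) (conv (conv u3 u4) (ρ.toLinearMap ∘ₗ γ')) := conv_assoc _ _ _
    _ = conv (conv u1 u2) (Algebra.linearMap k (E ⊗[k] H) ∘ₗ Coalgebra.counit) := by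
        rw [← hF, hFG]
    _ = conv u1 u2 := conv_one_right _
    _ = _ := hB

end Colin

section TmMachine

variable {k : Type*} [CommSemiring k]

/-- extensionality for maps out of `M ⊗ (N ⊗ P)` -/
lemma ext_r3 {M N P Q : Type*} [AddCommMonoid M] [AddCommMonoid N] [AddCommMonoid P]
    [AddCommMonoid Q] [Module k M] [Module k N] [Module k P] [Module k Q]
    {f g : M ⊗[k] (N ⊗[k] P) →ₗ[k] Q}
    (h : ∀ m n p, f (m ⊗ₜ (n ⊗ₜ p)) = g (m ⊗ₜ (n ⊗ₜ p))) : f = g := by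
  have h2 : f ∘ₗ (TensorProduct.assoc k M N P).toLinearMap
      = g ∘ₗ (TensorProduct.assoc k M N P).toLinearMap := by
    apply TensorProduct.ext_threefold
    intro m n p
    simpa using h m n p
  apply LinearMap.ext
  intro x
  obtain ⟨y, rfl⟩ := (TensorProduct.assoc k M N P).surjective x
  exact LinearMap.congr_fun h2 y

variable {E : Type*} [Semiring E] [Algebra k E]

/-- The basic building block `e ⊗ (a ⊗ w) ↦ (e * c a) ⊗ w`. -/
noncomputable def Tm {A : Type*} [AddCommMonoid A] [Module k A] (c : A →ₗ[k] E)
    (W : Type*) [AddCommMonoid W] [Module k W] :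
    E ⊗[k] (A ⊗[k] W) →ₗ[k] E ⊗[k] W :=
  TensorProduct.map (LinearMap.mul' k E ∘ₗ LinearMap.lTensor E c) LinearMap.id ∘ₗ
    (TensorProduct.assoc k E A W).symm.toLinearMap

lemma Tm_tmul {A : Type*} [AddCommMonoid A] [Module k A] (c : A →ₗ[k] E)
    {W : Type*} [AddCommMonoid W] [Module k W] (e : E) (a : A) (w : W) :
    Tm c W (e ⊗ₜ (a ⊗ₜ w)) = (e * c a) ⊗ₜ w := by
  simp [Tm]

lemma Tm_lTensor_comm {A : Type*} [AddCommMonoid A] [Module k A] (c : A →ₗ[k] E)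
    {W W' : Type*} [AddCommMonoid W] [AddCommMonoid W'] [Module k W] [Module k W']
    (φ : W →ₗ[k] W') :
    LinearMap.lTensor E φ ∘ₗ Tm c W = Tm c W' ∘ₗ LinearMap.lTensor E (LinearMap.lTensor A φ) := by
  apply ext_r3
  intro e a w
  simp [Tm_tmul]

lemma Tm_precomp {A A' : Type*} [AddCommMonoid A] [Module k A] [AddCommMonoid A'] [Module k A']
    (c : A' →ₗ[k] E) (d : A →ₗ[k] A')
    (W : Type*) [AddCommMonoid W] [Module k W] :
    Tm c W ∘ₗ LinearMap.lTensor E (LinearMap.rTensor W d) = Tm (c ∘ₗ d) W := by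
  apply ext_r3
  intro e a w
  simp [Tm_tmul]

lemma Tm_Tm {H : Type*} [AddCommMonoid H] [Module k H] (f g : H →ₗ[k] E)
    (W : Type*) [AddCommMonoid W] [Module k W] :
    Tm f W ∘ₗ Tm g (H ⊗[k] W) ∘ₗ LinearMap.lTensor E (TensorProduct.assoc k H H W).toLinearMap
      = Tm (LinearMap.mul' k E ∘ₗ TensorProduct.map g f) W := by
  apply ext_r3
  intro e n w
  induction n using TensorProduct.induction_on with
  | zero => simp
  | tmul a b => simp [Tm_tmul, mul_assoc]
  | add n₁ n₂ ih₁ ih₂ =>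
      simp only [add_tmul, tmul_add, map_add] at *
      rw [ih₁, ih₂]

lemma Tm_unit {H : Type*} [Semiring H] [Bialgebra k H]
    (W : Type*) [AddCommMonoid W] [Module k W] :
    Tm (Algebra.linearMap k E ∘ₗ Coalgebra.counit (R := k) (A := H)) W
      = LinearMap.lTensor E ((TensorProduct.lid k W).toLinearMap
          ∘ₗ LinearMap.rTensor W (Coalgebra.counit (R := k) (A := H))) := by
  apply ext_r3
  intro e a w
  simp only [Tm_tmul, LinearMap.comp_apply, Algebra.linearMap_apply, LinearMap.lTensor_tmul,
    LinearMap.rTensor_tmul, LinearEquiv.coe_coe, TensorProduct.lid_tmul]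
  rw [← Algebra.commutes, ← Algebra.smul_def, smul_tmul]

end TmMachine


/-- `e ↦ e ⊗ 1`. -/
noncomputable def rone (k E H : Type*) [CommSemiring k] [Semiring E] [Algebra k E]
    [AddCommMonoid H] [Module k H] [One H] : E →ₗ[k] E ⊗[k] H :=
  (TensorProduct.mk k E H).flip 1

@[simp] lemma rone_apply {k E H : Type*} [CommSemiring k] [Semiring E] [Algebra k E]
    [AddCommMonoid H] [Module k H] [One H] (e : E) :
    rone k E H e = e ⊗ₜ 1 := rfl

section KapInv

variable {k H E V : Type*} [Field k] [Ring H] [HopfAlgebra k H] [Ring E] [Algebra k E]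
  [AddCommGroup V] [Module k V]
variable (ρV : V →ₗ[k] H ⊗[k] V)

lemma kap_eq (γ : H →ₗ[k] E) : kap γ ρV = Tm γ V ∘ₗ LinearMap.lTensor E ρV := rfl

lemma kap_kap
    (hVcoassoc : ∀ v : V, (TensorProduct.assoc k H H V)
        (LinearMap.rTensor V (Coalgebra.comul (R := k)) (ρV v)) =
      LinearMap.lTensor H ρV (ρV v))
    (hVcounit : ∀ v : V,
      (TensorProduct.lid k V) (LinearMap.rTensor V (Coalgebra.counit (R := k)) (ρV v)) = v)
    (f g : H →ₗ[k] E) (hcv : conv g f = Algebra.linearMap k E ∘ₗ Coalgebra.counit) :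
    kap f ρV ∘ₗ kap g ρV = LinearMap.id := by
  have hVco_map : LinearMap.lTensor H ρV ∘ₗ ρV
      = (TensorProduct.assoc k H H V).toLinearMap
          ∘ₗ (LinearMap.rTensor V (Coalgebra.comul (R := k)) ∘ₗ ρV) :=
    LinearMap.ext fun v => (hVcoassoc v).symm
  have hVcu_map : (TensorProduct.lid k V).toLinearMap
      ∘ₗ (LinearMap.rTensor V (Coalgebra.counit (R := k)) ∘ₗ ρV) = LinearMap.id :=
    LinearMap.ext fun v => hVcounit v
  apply LinearMap.ext
  intro x
  calc (kap f ρV ∘ₗ kap g ρV) x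
      = Tm f V (LinearMap.lTensor E ρV (Tm g V (LinearMap.lTensor E ρV x))) := rfl
    _ = Tm f V (Tm g (H ⊗[k] V)
          (LinearMap.lTensor E (LinearMap.lTensor H ρV) (LinearMap.lTensor E ρV x))) := by
        rw [← LinearMap.comp_apply (LinearMap.lTensor E ρV), Tm_lTensor_comm]
        rfl
    _ = Tm f V (Tm g (H ⊗[k] V) (LinearMap.lTensor E (LinearMap.lTensor H ρV ∘ₗ ρV) x)) := by
        rw [LinearMap.lTensor_comp]
        rfl
    _ = Tm f V (Tm g (H ⊗[k] V) (LinearMap.lTensor E ((TensorProduct.assoc k H H V).toLinearMap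
          ∘ₗ (LinearMap.rTensor V (Coalgebra.comul (R := k)) ∘ₗ ρV)) x)) := by
        rw [hVco_map]
    _ = (Tm f V ∘ₗ Tm g (H ⊗[k] V)
          ∘ₗ LinearMap.lTensor E (TensorProduct.assoc k H H V).toLinearMap)
          (LinearMap.lTensor E (LinearMap.rTensor V (Coalgebra.comul (R := k)))
            (LinearMap.lTensor E ρV x)) := by
        rw [LinearMap.lTensor_comp, LinearMap.lTensor_comp]
        rfl
    _ = Tm (LinearMap.mul' k E ∘ₗ TensorProduct.map g f) V
          (LinearMap.lTensor E (LinearMap.rTensor V (Coalgebra.comul (R := k)))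
            (LinearMap.lTensor E ρV x)) := by
        rw [Tm_Tm]
    _ = Tm ((LinearMap.mul' k E ∘ₗ TensorProduct.map g f) ∘ₗ Coalgebra.comul) V
          (LinearMap.lTensor E ρV x) := by
        rw [← LinearMap.comp_apply (Tm _ V), Tm_precomp]
    _ = Tm (conv g f) V (LinearMap.lTensor E ρV x) := by
        rw [LinearMap.comp_assoc]
        rfl
    _ = Tm (Algebra.linearMap k E ∘ₗ Coalgebra.counit (R := k) (A := H)) V
          (LinearMap.lTensor E ρV x) := by rw [hcv]
    _ = LinearMap.lTensor E ((TensorProduct.lid k V).toLinearMap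
          ∘ₗ LinearMap.rTensor V (Coalgebra.counit (R := k)))
          (LinearMap.lTensor E ρV x) := by rw [Tm_unit]
    _ = LinearMap.lTensor E ((TensorProduct.lid k V).toLinearMap
          ∘ₗ (LinearMap.rTensor V (Coalgebra.counit (R := k)) ∘ₗ ρV)) x := by
        simp only [LinearMap.lTensor_comp, LinearMap.comp_apply]
    _ = x := by rw [hVcu_map, LinearMap.lTensor_id]; rfl

end KapInv

section BPart
variable {k H E V : Type*} [Field k] [Ring H] [HopfAlgebra k H] [Ring E] [Algebra k E]
  [AddCommGroup V] [Module k V]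

lemma kap_cotensor (ρ : E →ₐ[k] E ⊗[k] H) (ρV : V →ₗ[k] H ⊗[k] V)
    (hVcoassoc : ∀ v : V, (TensorProduct.assoc k H H V)
        (LinearMap.rTensor V (Coalgebra.comul (R := k)) (ρV v)) =
      LinearMap.lTensor H ρV (ρV v))
    (γ : H →ₗ[k] E)
    (hγ : ∀ h : H, ρ (γ h) = TensorProduct.map γ LinearMap.id (Coalgebra.comul (R := k) h))
    (y : E ⊗[k] V)
    (hy : LinearMap.rTensor V ρ.toLinearMap y = LinearMap.rTensor V (rone k E H) y) :
    (TensorProduct.assoc k E H V) (LinearMap.rTensor V ρ.toLinearMap (kap γ ρV y))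
      = LinearMap.lTensor E ρV (kap γ ρV y) := by
  set C : (E ⊗[k] H) ⊗[k] (H ⊗[k] V) →ₗ[k] (E ⊗[k] H) ⊗[k] V :=
    LinearMap.rTensor V (LinearMap.mul' k (E ⊗[k] H)
        ∘ₗ LinearMap.lTensor (E ⊗[k] H) (ρ.toLinearMap ∘ₗ γ))
      ∘ₗ (TensorProduct.assoc k (E ⊗[k] H) H V).symm.toLinearMap with hC
  have step1 : LinearMap.rTensor V ρ.toLinearMap ∘ₗ Tm γ V
      = C ∘ₗ LinearMap.rTensor (H ⊗[k] V) ρ.toLinearMap := by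
    apply ext_r3
    intro e h v
    simp [hC, Tm_tmul, map_mul]
  have hVco_map : LinearMap.lTensor H ρV ∘ₗ ρV
      = (TensorProduct.assoc k H H V).toLinearMap
          ∘ₗ (LinearMap.rTensor V (Coalgebra.comul (R := k)) ∘ₗ ρV) :=
    LinearMap.ext fun v => (hVcoassoc v).symm
  have step2 : C ∘ₗ LinearMap.rTensor (H ⊗[k] V) (rone k E H)
      = (TensorProduct.assoc k E H V).symm.toLinearMap ∘ₗ Tm γ (H ⊗[k] V)
          ∘ₗ LinearMap.lTensor E ((TensorProduct.assoc k H H V).toLinearMap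
              ∘ₗ LinearMap.rTensor V (Coalgebra.comul (R := k))) := by
    apply ext_r3
    intro e h v
    simp only [hC, LinearMap.comp_apply, LinearMap.rTensor_tmul, rone_apply,
      LinearEquiv.coe_coe, TensorProduct.assoc_symm_tmul, LinearMap.lTensor_tmul,
      LinearMap.mul'_apply, AlgHom.toLinearMap_apply, hγ h]
    generalize Coalgebra.comul (R := k) h = t
    induction t using TensorProduct.induction_on with
    | zero => simp
    | tmul a b =>
        simp [Tm_tmul, Algebra.TensorProduct.tmul_mul_tmul]
    | add t₁ t₂ ih₁ ih₂ =>
        simp only [map_add, add_tmul, tmul_add, LinearMap.map_add, add_mul, mul_add] at *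
        rw [ih₁, ih₂]
  have comm1 : LinearMap.rTensor (H ⊗[k] V) ρ.toLinearMap ∘ₗ LinearMap.lTensor E ρV
      = LinearMap.lTensor (E ⊗[k] H) ρV ∘ₗ LinearMap.rTensor V ρ.toLinearMap := by
    rw [LinearMap.rTensor_comp_lTensor, LinearMap.lTensor_comp_rTensor]
  have comm2 : LinearMap.rTensor (H ⊗[k] V) (rone k E H) ∘ₗ LinearMap.lTensor E ρV
      = LinearMap.lTensor (E ⊗[k] H) ρV ∘ₗ LinearMap.rTensor V (rone k E H) := by
    rw [LinearMap.rTensor_comp_lTensor, LinearMap.lTensor_comp_rTensor]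
  have main : LinearMap.rTensor V ρ.toLinearMap (kap γ ρV y)
      = (TensorProduct.assoc k E H V).symm (LinearMap.lTensor E ρV (kap γ ρV y)) := by
    calc LinearMap.rTensor V ρ.toLinearMap (kap γ ρV y)
        = (LinearMap.rTensor V ρ.toLinearMap ∘ₗ Tm γ V) (LinearMap.lTensor E ρV y) := rfl
      _ = C (LinearMap.rTensor (H ⊗[k] V) ρ.toLinearMap (LinearMap.lTensor E ρV y)) := by
          rw [step1]; rfl
      _ = C (LinearMap.lTensor (E ⊗[k] H) ρV (LinearMap.rTensor V ρ.toLinearMap y)) := by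
          have hc := LinearMap.congr_fun comm1 y
          simp only [LinearMap.comp_apply] at hc ⊢
          rw [hc]
      _ = C (LinearMap.lTensor (E ⊗[k] H) ρV (LinearMap.rTensor V (rone k E H) y)) := by
          rw [hy]
      _ = (C ∘ₗ LinearMap.rTensor (H ⊗[k] V) (rone k E H)) (LinearMap.lTensor E ρV y) := by
          have hc := LinearMap.congr_fun comm2 y
          simp only [LinearMap.comp_apply] at hc ⊢
          rw [hc]
      _ = (TensorProduct.assoc k E H V).symm (Tm γ (H ⊗[k] V)
            (LinearMap.lTensor E ((TensorProduct.assoc k H H V).toLinearMap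
              ∘ₗ LinearMap.rTensor V (Coalgebra.comul (R := k)))
              (LinearMap.lTensor E ρV y))) := by
          rw [step2]; rfl
      _ = (TensorProduct.assoc k E H V).symm (Tm γ (H ⊗[k] V)
            (LinearMap.lTensor E (LinearMap.lTensor H ρV) (LinearMap.lTensor E ρV y))) := by
          rw [← LinearMap.comp_apply (LinearMap.lTensor E _) (LinearMap.lTensor E ρV),
            ← LinearMap.lTensor_comp, LinearMap.comp_assoc, ← hVco_map,
            LinearMap.lTensor_comp, LinearMap.comp_apply]
      _ = (TensorProduct.assoc k E H V).symm (LinearMap.lTensor E ρV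
            (Tm γ V (LinearMap.lTensor E ρV y))) := by
          rw [← LinearMap.comp_apply (Tm γ (H ⊗[k] V)), ← Tm_lTensor_comm]; rfl
      _ = (TensorProduct.assoc k E H V).symm (LinearMap.lTensor E ρV (kap γ ρV y)) := rfl
  rw [main, LinearEquiv.apply_symm_apply]

end BPart

section CPart
variable {k H E : Type*} [Field k] [Ring H] [HopfAlgebra k H] [Ring E] [Algebra k E]

lemma Ckey (ρ : E →ₐ[k] E ⊗[k] H)
    (hcoassoc : ∀ x : E, (TensorProduct.assoc k E H H)
        (LinearMap.rTensor H ρ.toLinearMap (ρ x)) =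
      LinearMap.lTensor E (Coalgebra.comul (R := k)) (ρ x))
    (γ' : H →ₗ[k] E)
    (Bco : ρ.toLinearMap ∘ₗ γ'
      = (TensorProduct.map γ' (HopfAlgebra.antipode (R := k) (A := H))
          ∘ₗ (TensorProduct.comm k H H).toLinearMap) ∘ₗ Coalgebra.comul) :
    (LinearMap.mul' k (E ⊗[k] H)
        ∘ₗ TensorProduct.map ρ.toLinearMap (ρ.toLinearMap ∘ₗ γ')) ∘ₗ ρ.toLinearMap
      = rone k E H ∘ₗ ((LinearMap.mul' k E ∘ₗ LinearMap.lTensor E γ') ∘ₗ ρ.toLinearMap) := by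
  set S : H →ₗ[k] H := HopfAlgebra.antipode (R := k) (A := H) with hS
  set Bcore : H ⊗[k] H →ₗ[k] E ⊗[k] H :=
    TensorProduct.map γ' S ∘ₗ (TensorProduct.comm k H H).toLinearMap with hBcore
  set μ₅ : (E ⊗[k] H) ⊗[k] H →ₗ[k] E ⊗[k] H :=
    LinearMap.mul' k (E ⊗[k] H) ∘ₗ LinearMap.lTensor (E ⊗[k] H) (rone k E H ∘ₗ γ') with hμ₅
  set ζ₂ : E ⊗[k] (H ⊗[k] (H ⊗[k] H)) →ₗ[k] E ⊗[k] H :=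
    LinearMap.mul' k (E ⊗[k] H) ∘ₗ LinearMap.lTensor (E ⊗[k] H) Bcore
      ∘ₗ (TensorProduct.assoc k E H (H ⊗[k] H)).symm.toLinearMap with hζ₂
  -- E-coassociativity in map form
  have hco_map : LinearMap.rTensor H ρ.toLinearMap ∘ₗ ρ.toLinearMap
      = (TensorProduct.assoc k E H H).symm.toLinearMap
          ∘ₗ (LinearMap.lTensor E (Coalgebra.comul (R := k)) ∘ₗ ρ.toLinearMap) := by
    apply LinearMap.ext
    intro x
    simp only [LinearMap.comp_apply, LinearEquiv.coe_coe, AlgHom.toLinearMap_apply]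
    rw [← hcoassoc x, LinearEquiv.symm_apply_apply]
  have claimD : LinearMap.lTensor (E ⊗[k] H) (Coalgebra.comul (R := k) (A := H))
        ∘ₗ (TensorProduct.assoc k E H H).symm.toLinearMap
      = (TensorProduct.assoc k E H (H ⊗[k] H)).symm.toLinearMap
          ∘ₗ LinearMap.lTensor E (LinearMap.lTensor H (Coalgebra.comul (R := k))) := by
    apply ext_r3
    intro e a b
    simp
  have claimZ : ζ₂ ∘ₗ LinearMap.lTensor E (TensorProduct.assoc k H H H).toLinearMap
      = μ₅ ∘ₗ (TensorProduct.assoc k E H H).symm.toLinearMap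
          ∘ₗ LinearMap.lTensor E (LinearMap.rTensor H (LinearMap.mul' k H
              ∘ₗ LinearMap.lTensor H S)) := by
    apply ext_r3
    intro e n b
    induction n using TensorProduct.induction_on with
    | zero => simp only [zero_tmul, tmul_zero, LinearMap.map_zero]
    | tmul a c =>
        simp [hζ₂, hμ₅, hBcore, Algebra.TensorProduct.tmul_mul_tmul]
    | add t₁ t₂ ih₁ ih₂ =>
        simp only [map_add, add_tmul, tmul_add, LinearMap.map_add] at *
        rw [ih₁, ih₂]
  have claim3 : LinearMap.rTensor H (Algebra.linearMap k H
        ∘ₗ Coalgebra.counit (R := k)) ∘ₗ Coalgebra.comul (R := k) (A := H)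
      = TensorProduct.mk k H H 1 := by
    rw [LinearMap.rTensor_comp, LinearMap.comp_assoc, Coalgebra.rTensor_counit_comp_comul]
    apply LinearMap.ext
    intro h
    simp
  have claimX : μ₅ ∘ₗ (TensorProduct.assoc k E H H).symm.toLinearMap
        ∘ₗ LinearMap.lTensor E (TensorProduct.mk k H H 1)
      = rone k E H ∘ₗ (LinearMap.mul' k E ∘ₗ LinearMap.lTensor E γ') := by
    apply TensorProduct.ext'
    intro e a
    simp [hμ₅, Algebra.TensorProduct.tmul_mul_tmul]
  have hopfL : LinearMap.mul' k H ∘ₗ (LinearMap.lTensor H S ∘ₗ Coalgebra.comul)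
      = Algebra.linearMap k H ∘ₗ Coalgebra.counit := by
    rw [← LinearMap.comp_assoc, hS]
    exact HopfAlgebra.mul_antipode_lTensor_comul
  -- main elementwise computation
  apply LinearMap.ext
  intro e
  simp only [LinearMap.comp_apply, AlgHom.toLinearMap_apply]
  calc LinearMap.mul' k (E ⊗[k] H)
        (TensorProduct.map ρ.toLinearMap (ρ.toLinearMap ∘ₗ γ') (ρ e))
      = LinearMap.mul' k (E ⊗[k] H) (LinearMap.lTensor (E ⊗[k] H) (ρ.toLinearMap ∘ₗ γ')
          (LinearMap.rTensor H ρ.toLinearMap (ρ e))) := by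
        rw [← LinearMap.lTensor_comp_rTensor]; rfl
    _ = LinearMap.mul' k (E ⊗[k] H) (LinearMap.lTensor (E ⊗[k] H) (ρ.toLinearMap ∘ₗ γ')
          ((TensorProduct.assoc k E H H).symm
            (LinearMap.lTensor E (Coalgebra.comul (R := k)) (ρ e)))) := by
        have hc := LinearMap.congr_fun hco_map e
        simp only [LinearMap.comp_apply, LinearEquiv.coe_coe, AlgHom.toLinearMap_apply] at hc
        rw [hc]
    _ = LinearMap.mul' k (E ⊗[k] H) (LinearMap.lTensor (E ⊗[k] H) Bcore
          (LinearMap.lTensor (E ⊗[k] H) (Coalgebra.comul (R := k))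
            ((TensorProduct.assoc k E H H).symm
              (LinearMap.lTensor E (Coalgebra.comul (R := k)) (ρ e))))) := by
        rw [Bco, LinearMap.lTensor_comp]; rfl
    _ = ζ₂ (LinearMap.lTensor E (LinearMap.lTensor H (Coalgebra.comul (R := k)))
          (LinearMap.lTensor E (Coalgebra.comul (R := k)) (ρ e))) := by
        have hc := LinearMap.congr_fun claimD
          (LinearMap.lTensor E (Coalgebra.comul (R := k)) (ρ e))
        simp only [LinearMap.comp_apply, LinearEquiv.coe_coe] at hc
        rw [hc, hζ₂]; rfl
    _ = ζ₂ (LinearMap.lTensor E ((TensorProduct.assoc k H H H).toLinearMap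
          ∘ₗ (LinearMap.rTensor H (Coalgebra.comul (R := k)) ∘ₗ Coalgebra.comul)) (ρ e)) := by
        rw [← LinearMap.comp_apply (LinearMap.lTensor E _) (LinearMap.lTensor E _),
          ← LinearMap.lTensor_comp, ← Coalgebra.coassoc (R := k) (A := H)]
    _ = (ζ₂ ∘ₗ LinearMap.lTensor E (TensorProduct.assoc k H H H).toLinearMap)
          (LinearMap.lTensor E (LinearMap.rTensor H (Coalgebra.comul (R := k))
            ∘ₗ Coalgebra.comul) (ρ e)) := by
        rw [LinearMap.lTensor_comp]; rfl
    _ = μ₅ ((TensorProduct.assoc k E H H).symm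
          (LinearMap.lTensor E (LinearMap.rTensor H (LinearMap.mul' k H ∘ₗ LinearMap.lTensor H S))
            (LinearMap.lTensor E (LinearMap.rTensor H (Coalgebra.comul (R := k))
              ∘ₗ Coalgebra.comul) (ρ e)))) := by
        rw [claimZ]; rfl
    _ = μ₅ ((TensorProduct.assoc k E H H).symm
          (LinearMap.lTensor E (TensorProduct.mk k H H 1) (ρ e))) := by
        congr 1
        rw [← LinearMap.comp_apply (LinearMap.lTensor E _) (LinearMap.lTensor E _),
          ← LinearMap.lTensor_comp]
        congr 2
        rw [← LinearMap.comp_assoc, ← LinearMap.rTensor_comp, LinearMap.comp_assoc, hopfL,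
          claim3]
    _ = rone k E H (LinearMap.mul' k E (LinearMap.lTensor E γ' (ρ e))) := by
        have hc := LinearMap.congr_fun claimX (ρ e)
        simp only [LinearMap.comp_apply, LinearEquiv.coe_coe] at hc
        exact hc

end CPart

section CPart2
variable {k H E V : Type*} [Field k] [Ring H] [HopfAlgebra k H] [Ring E] [Algebra k E]
  [AddCommGroup V] [Module k V]

lemma kap'_coinv (ρ : E →ₐ[k] E ⊗[k] H) (ρV : V →ₗ[k] H ⊗[k] V)
    (hcoassoc : ∀ x : E, (TensorProduct.assoc k E H H)
        (LinearMap.rTensor H ρ.toLinearMap (ρ x)) =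
      LinearMap.lTensor E (Coalgebra.comul (R := k)) (ρ x))
    (γ' : H →ₗ[k] E)
    (Bco : ρ.toLinearMap ∘ₗ γ'
      = (TensorProduct.map γ' (HopfAlgebra.antipode (R := k) (A := H))
          ∘ₗ (TensorProduct.comm k H H).toLinearMap) ∘ₗ Coalgebra.comul)
    (x : E ⊗[k] V)
    (hx : (TensorProduct.assoc k E H V) (LinearMap.rTensor V ρ.toLinearMap x)
      = LinearMap.lTensor E ρV x) :
    LinearMap.rTensor V ρ.toLinearMap (kap γ' ρV x)
      = LinearMap.rTensor V (rone k E H) (kap γ' ρV x) := by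
  have hC1 : LinearMap.rTensor V ρ.toLinearMap ∘ₗ Tm γ' V
      = LinearMap.rTensor V (LinearMap.mul' k (E ⊗[k] H)
            ∘ₗ TensorProduct.map ρ.toLinearMap (ρ.toLinearMap ∘ₗ γ'))
          ∘ₗ (TensorProduct.assoc k E H V).symm.toLinearMap := by
    apply ext_r3
    intro e h v
    simp [Tm_tmul, map_mul]
  have hC2 : LinearMap.rTensor V (rone k E H) ∘ₗ Tm γ' V
      = LinearMap.rTensor V (rone k E H ∘ₗ (LinearMap.mul' k E ∘ₗ LinearMap.lTensor E γ'))
          ∘ₗ (TensorProduct.assoc k E H V).symm.toLinearMap := by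
    apply ext_r3
    intro e h v
    simp [Tm_tmul]
  have heq : (TensorProduct.assoc k E H V).symm (LinearMap.lTensor E ρV x)
      = LinearMap.rTensor V ρ.toLinearMap x := by
    rw [← hx, LinearEquiv.symm_apply_apply]
  have hkap : kap γ' ρV x = Tm γ' V (LinearMap.lTensor E ρV x) := rfl
  rw [hkap]
  have e1 := LinearMap.congr_fun hC1 (LinearMap.lTensor E ρV x)
  have e2 := LinearMap.congr_fun hC2 (LinearMap.lTensor E ρV x)
  simp only [LinearMap.comp_apply, LinearEquiv.coe_coe] at e1 e2
  rw [e1, e2, heq, ← LinearMap.comp_apply (LinearMap.rTensor V _) (LinearMap.rTensor V _),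
    ← LinearMap.rTensor_comp, ← LinearMap.comp_apply (LinearMap.rTensor V _) (LinearMap.rTensor V _),
    ← LinearMap.rTensor_comp, Ckey ρ hcoassoc γ' Bco]
  rfl

end CPart2

/-- The automorphism `κ(e ⊗ v) = Σ e γ(v₍₋₁₎) ⊗ v₍₀₎` restricts to an isomorphism of left
`E^{coH}`-modules from `E^{coH} ⊗ V` onto the cotensor product `E □ V`. -/
theorem stmt13 {k H E V : Type*} [Field k] [Ring H] [HopfAlgebra k H] [Ring E] [Algebra k E]
    [AddCommGroup V] [Module k V]
    (ρ : E →ₐ[k] E ⊗[k] H)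
    (hcoassoc : ∀ x : E, (TensorProduct.assoc k E H H)
        (LinearMap.rTensor H ρ.toLinearMap (ρ x)) =
      LinearMap.lTensor E (Coalgebra.comul (R := k)) (ρ x))
    (hcounit : ∀ x : E,
      (TensorProduct.rid k E) (LinearMap.lTensor E (Coalgebra.counit (R := k)) (ρ x)) = x)
    (ρV : V →ₗ[k] H ⊗[k] V)
    (hVcoassoc : ∀ v : V, (TensorProduct.assoc k H H V)
        (LinearMap.rTensor V (Coalgebra.comul (R := k)) (ρV v)) =
      LinearMap.lTensor H ρV (ρV v))
    (hVcounit : ∀ v : V,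
      (TensorProduct.lid k V) (LinearMap.rTensor V (Coalgebra.counit (R := k)) (ρV v)) = v)
    (γ γ' : H →ₗ[k] E)
    (hγ : ∀ h : H, ρ (γ h) = TensorProduct.map γ LinearMap.id (Coalgebra.comul (R := k) h))
    (hconv₁ : conv γ γ' = Algebra.linearMap k E ∘ₗ Coalgebra.counit)
    (hconv₂ : conv γ' γ = Algebra.linearMap k E ∘ₗ Coalgebra.counit) :
    -- κ restricted to E^{coH} ⊗ V …
    (∀ z : (coinv ρ) ⊗[k] V,
      kap γ ρV (TensorProduct.map (coinv ρ).val.toLinearMap LinearMap.id z) ∈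
        cotensor ρ ρV) ∧
    -- … is injective with image exactly E □ V …
    Function.Injective
      (kap γ ρV ∘ₗ TensorProduct.map (coinv ρ).val.toLinearMap LinearMap.id) ∧
    Set.range (kap γ ρV ∘ₗ TensorProduct.map (coinv ρ).val.toLinearMap LinearMap.id) =
      cotensor ρ ρV ∧
    -- … and is left E^{coH}-linear
    (∀ (u : coinv ρ) (z : (coinv ρ) ⊗[k] V),
      kap γ ρV (TensorProduct.map (coinv ρ).val.toLinearMap LinearMap.id
          (LinearMap.rTensor V (LinearMap.mulLeft k u) z)) =
        LinearMap.rTensor V (LinearMap.mulLeft k (u : E))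
          (kap γ ρV (TensorProduct.map (coinv ρ).val.toLinearMap LinearMap.id z))) := by
  classical
  have hM : TensorProduct.map (coinv ρ).val.toLinearMap (LinearMap.id : V →ₗ[k] V)
      = LinearMap.rTensor V (coinv ρ).val.toLinearMap := rfl
  have hBco := gamma'_colinear ρ γ γ' hγ hconv₁ hconv₂
  have hκ'κ : kap γ' ρV ∘ₗ kap γ ρV = LinearMap.id :=
    kap_kap ρV hVcoassoc hVcounit γ' γ hconv₁
  have hκκ' : kap γ ρV ∘ₗ kap γ' ρV = LinearMap.id :=
    kap_kap ρV hVcoassoc hVcounit γ γ' hconv₂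
  have hcompι : ρ.toLinearMap ∘ₗ (coinv ρ).val.toLinearMap
      = rone k E H ∘ₗ (coinv ρ).val.toLinearMap := by
    apply LinearMap.ext
    intro s
    have hs : ρ (s : E) = (s : E) ⊗ₜ 1 := s.2
    simp only [LinearMap.comp_apply, AlgHom.toLinearMap_apply, Subalgebra.coe_val, rone_apply]
    exact hs
  have hy : ∀ z : (coinv ρ) ⊗[k] V,
      LinearMap.rTensor V ρ.toLinearMap
          (TensorProduct.map (coinv ρ).val.toLinearMap LinearMap.id z)
        = LinearMap.rTensor V (rone k E H)
          (TensorProduct.map (coinv ρ).val.toLinearMap LinearMap.id z) := by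
    intro z
    rw [hM, ← LinearMap.comp_apply, ← LinearMap.rTensor_comp, hcompι, LinearMap.rTensor_comp]
    rfl
  have part1 : ∀ z : (coinv ρ) ⊗[k] V,
      kap γ ρV (TensorProduct.map (coinv ρ).val.toLinearMap LinearMap.id z)
        ∈ cotensor ρ ρV := by
    intro z
    show (TensorProduct.assoc k E H V) (LinearMap.rTensor V ρ.toLinearMap _)
      = LinearMap.lTensor E ρV _
    exact kap_cotensor ρ ρV hVcoassoc γ hγ _ (hy z)
  have hιinj : Function.Injective ⇑(coinv ρ).val.toLinearMap := fun s t hst =>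
    Subtype.ext hst
  have hMinj : Function.Injective
      ⇑(TensorProduct.map (coinv ρ).val.toLinearMap (LinearMap.id : V →ₗ[k] V)) := by
    rw [hM]
    exact Module.Flat.rTensor_preserves_injective_linearMap _ hιinj
  have hkinj : Function.Injective ⇑(kap γ ρV) := by
    intro x y hxy
    have h1 := LinearMap.congr_fun hκ'κ x
    have h2 := LinearMap.congr_fun hκ'κ y
    simp only [LinearMap.comp_apply, LinearMap.id_apply] at h1 h2
    rw [← h1, ← h2, hxy]
  have part2 : Function.Injective
      ⇑(kap γ ρV ∘ₗ TensorProduct.map (coinv ρ).val.toLinearMap LinearMap.id) := by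
    rw [LinearMap.coe_comp]
    exact hkinj.comp hMinj
  have hexact : Function.Exact ⇑(coinv ρ).val.toLinearMap
      ⇑(ρ.toLinearMap - rone k E H) := by
    intro y
    constructor
    · intro h0
      have h1 : ρ y = y ⊗ₜ 1 := by
        have h2 : ρ.toLinearMap y - rone k E H y = 0 := h0
        rw [sub_eq_zero] at h2
        simpa using h2
      exact ⟨⟨y, h1⟩, rfl⟩
    · rintro ⟨s, rfl⟩
      have h1 : ρ (s : E) = (s : E) ⊗ₜ 1 := s.2
      simp only [LinearMap.sub_apply, rone_apply, AlgHom.toLinearMap_apply,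
        Subalgebra.coe_val]
      rw [h1, sub_self]
  have hexactV := Module.Flat.rTensor_exact (M := V) hexact
  have part3 : Set.range
        ⇑(kap γ ρV ∘ₗ TensorProduct.map (coinv ρ).val.toLinearMap LinearMap.id)
      = cotensor ρ ρV := by
    apply Set.Subset.antisymm
    · rintro x ⟨z, rfl⟩
      exact part1 z
    · intro x hx
      have hx' : (TensorProduct.assoc k E H V) (LinearMap.rTensor V ρ.toLinearMap x)
          = LinearMap.lTensor E ρV x := hx
      have hker := kap'_coinv ρ ρV hcoassoc γ' hBco x hx'
      have h0 : LinearMap.rTensor V (ρ.toLinearMap - rone k E H) (kap γ' ρV x) = 0 := by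
        rw [LinearMap.rTensor_sub, LinearMap.sub_apply, hker, sub_self]
      obtain ⟨z, hz⟩ := (hexactV _).mp h0
      refine ⟨z, ?_⟩
      show kap γ ρV (TensorProduct.map (coinv ρ).val.toLinearMap LinearMap.id z) = x
      rw [hM]
      rw [hz]
      have := LinearMap.congr_fun hκκ' x
      simpa using this
  refine ⟨part1, part2, part3, ?_⟩
  intro u z
  have lemA : TensorProduct.map (coinv ρ).val.toLinearMap (LinearMap.id : V →ₗ[k] V)
        ∘ₗ LinearMap.rTensor V (LinearMap.mulLeft k u)
      = LinearMap.rTensor V (LinearMap.mulLeft k (u : E))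
          ∘ₗ TensorProduct.map (coinv ρ).val.toLinearMap LinearMap.id := by
    have hcl : (coinv ρ).val.toLinearMap ∘ₗ LinearMap.mulLeft k u
        = LinearMap.mulLeft k (u : E) ∘ₗ (coinv ρ).val.toLinearMap := by
      apply LinearMap.ext
      intro s
      simp
    rw [hM, ← LinearMap.rTensor_comp, ← LinearMap.rTensor_comp, hcl]
  have sub1 : LinearMap.lTensor E ρV ∘ₗ LinearMap.rTensor V (LinearMap.mulLeft k (u : E))
      = LinearMap.rTensor (H ⊗[k] V) (LinearMap.mulLeft k (u : E))
          ∘ₗ LinearMap.lTensor E ρV := by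
    rw [LinearMap.lTensor_comp_rTensor, LinearMap.rTensor_comp_lTensor]
  have sub2 : Tm γ V ∘ₗ LinearMap.rTensor (H ⊗[k] V) (LinearMap.mulLeft k (u : E))
      = LinearMap.rTensor V (LinearMap.mulLeft k (u : E)) ∘ₗ Tm γ V := by
    apply ext_r3
    intro e h v
    simp [Tm_tmul, mul_assoc]
  have lemB : kap γ ρV ∘ₗ LinearMap.rTensor V (LinearMap.mulLeft k (u : E))
      = LinearMap.rTensor V (LinearMap.mulLeft k (u : E)) ∘ₗ kap γ ρV := by
    calc kap γ ρV ∘ₗ LinearMap.rTensor V (LinearMap.mulLeft k (u : E))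
        = Tm γ V ∘ₗ (LinearMap.lTensor E ρV
            ∘ₗ LinearMap.rTensor V (LinearMap.mulLeft k (u : E))) := rfl
      _ = (Tm γ V ∘ₗ LinearMap.rTensor (H ⊗[k] V) (LinearMap.mulLeft k (u : E)))
            ∘ₗ LinearMap.lTensor E ρV := by rw [sub1]; rfl
      _ = (LinearMap.rTensor V (LinearMap.mulLeft k (u : E)) ∘ₗ Tm γ V)
            ∘ₗ LinearMap.lTensor E ρV := by rw [sub2]
      _ = LinearMap.rTensor V (LinearMap.mulLeft k (u : E)) ∘ₗ kap γ ρV := rfl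
  have e1 := LinearMap.congr_fun lemA z
  simp only [LinearMap.comp_apply] at e1
  rw [e1]
  have e2 := LinearMap.congr_fun lemB
    (TensorProduct.map (coinv ρ).val.toLinearMap LinearMap.id z)
  simp only [LinearMap.comp_apply] at e2
  rw [e2]
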